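/- arXiv:2309.01997 — 4 statements merged into one kernel-verified Lean document; each statement's English description precedes it below -/
import Mathlib

section
/- Let A be a finite alphabet and k, k' positive integers. Then F_k · F_{k'} = F_{k+k'}, where F_j = {(w,w') ∈ A* × A* : d_F(w,w') ≤ j} and · denotes composition of relations. That is, d_F(w,w') ≤ k + k' holds if and only if there exists w'' ∈ A* with d_F(w,w'') ≤ k and d_F(w'',w') ≤ k'. -/
open scoped ENNReal

/-- Length of a longest common prefix of `w` and `w'`. -/
noncomputable def lcpLen {A : Type*} (w w' : List A) : ℕ :=
  sSup {n | ∃ p : List A, p.length = n ∧ p <+: w ∧ p <+: w'}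

/-- The prefix distance `d_P(w,w') = |w| + |w'| - 2|w ∧ w'|`. -/
noncomputable def dP {A : Type*} (w w' : List A) : ℕ :=
  w.length + w'.length - 2 * lcpLen w w'

/-- Length of a longest common suffix of `w` and `w'`. -/
noncomputable def lcsLen {A : Type*} (w w' : List A) : ℕ :=
  sSup {n | ∃ s : List A, s.length = n ∧ s <:+ w ∧ s <:+ w'}

/-- The suffix distance `d_S(w,w') = |w| + |w'| - 2|s|`. -/
noncomputable def dS {A : Type*} (w w' : List A) : ℕ :=
  w.length + w'.length - 2 * lcsLen w w'

/-- Length of a longest common factor of `w` and `w'`. -/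
noncomputable def lcfLen {A : Type*} (w w' : List A) : ℕ :=
  sSup {n | ∃ f : List A, f.length = n ∧ f <:+: w ∧ f <:+: w'}

/-- The factor distance `d_F(w,w') = |w| + |w'| - 2|f|`,
`f` a maximum-length common factor. -/
noncomputable def dF {A : Type*} (w w' : List A) : ℕ :=
  w.length + w'.length - 2 * lcfLen w w'

/-- `n`-fold composition of a binary relation. -/
def relPow {α : Type*} (r : α → α → Prop) : ℕ → α → α → Prop
  | 0 => Eq
  | n + 1 => Relation.Comp (relPow r n) r

/-- `X` is a (variable-length) code: every word of `X*` factorizes uniquely over `X`. -/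
def IsCode {A : Type*} (X : Set (List A)) : Prop :=
  ∀ l m : List (List A), (∀ x ∈ l, x ∈ X) → (∀ x ∈ m, x ∈ X) →
    l.flatten = m.flatten → l = m

/-- `X` is complete: every word is a factor of some word of `X*`. -/
def IsCompleteSet {A : Type*} (X : Set (List A)) : Prop :=
  ∀ w : List A, ∃ l : List (List A), (∀ x ∈ l, x ∈ X) ∧ w <:+: l.flatten

/-- `X ⊆ A*` is a regular language: accepted by a finite deterministic automaton. -/
def IsRegularLang {A : Type*} (X : Set (List A)) : Prop :=
  ∃ (Q : Type) (_ : Fintype Q) (M : DFA A Q), M.accepts = X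

/-- The uniform Bernoulli measure `μ(X) = Σ_{x ∈ X} |A|^{-|x|}`. -/
noncomputable def mu (A : Type*) [Fintype A] (X : Set (List A)) : ℝ≥0∞ :=
  ∑' x : X, ((Fintype.card A : ℝ≥0∞))⁻¹ ^ (x : List A).length

/-! The composite `F_k · F_{k'}` is contained in `F_{k+k'}` because `d_F` satisfies the triangle
inequality: two factors of the middle word overlap in a common factor of length at least
`|f| + |g| - |w''|`. Conversely, if `f` is a longest common factor of `w` and `w'`, an
intermediate word is obtained by growing `f` inside `w'` (or, symmetrically, inside `w`) to the
right length. -/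

namespace List

variable {α : Type*}

theorem IsInfix.exists_infix_infix_length_eq {f w : List α} (hf : f <:+: w) {n : ℕ}
    (hfn : f.length ≤ n) (hnw : n ≤ w.length) :
    ∃ g : List α, f <:+: g ∧ g <:+: w ∧ g.length = n := by
  obtain ⟨u, v, rfl⟩ := hf
  simp only [length_append] at hnw
  set s := min (n - f.length) v.length
  set r := n - f.length - s
  refine ⟨u.drop (u.length - r) ++ f ++ v.take s, ⟨_, _, rfl⟩,
    ⟨u.take (u.length - r), v.drop s, ?_⟩, ?_⟩
  · simp only [← append_assoc, take_append_drop]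
    simp only [append_assoc, take_append_drop]
  · simp only [length_append, length_drop, length_take]
    omega

theorem IsInfix.exists_eq_take_drop {f m : List α} (hf : f <:+: m) :
    ∃ i, i + f.length ≤ m.length ∧ f = (m.drop i).take f.length := by
  obtain ⟨u, v, rfl⟩ := hf
  refine ⟨u.length, by simp, ?_⟩
  simp [append_assoc]

theorem exists_common_infix_take_drop (m : List α) {i j p q : ℕ} (hij : i ≤ j)
    (hp : i + p ≤ m.length) (hq : j + q ≤ m.length) :
    ∃ h : List α, h <:+: (m.drop i).take p ∧ h <:+: (m.drop j).take q ∧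
      p + q ≤ m.length + h.length := by
  have hshift : ((m.drop i).take p).drop (j - i) = (m.drop j).take (p - (j - i)) := by
    rw [drop_take, drop_drop, Nat.add_sub_cancel' hij]
  have hh : (m.drop j).take (min q (p - (j - i))) =
      (((m.drop i).take p).drop (j - i)).take q := by
    rw [hshift, take_take]
  refine ⟨(m.drop j).take (min q (p - (j - i))), ?_,
    (take_prefix_take_left (min_le_left _ _)).isInfix, ?_⟩
  · rw [hh]
    exact (take_prefix _ _).isInfix.trans (drop_suffix _ _).isInfix
  · simp only [length_take, length_drop]
    omega

theorem IsInfix.exists_common_infix {f g m : List α} (hf : f <:+: m) (hg : g <:+: m) :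
    ∃ h : List α, h <:+: f ∧ h <:+: g ∧ f.length + g.length ≤ m.length + h.length := by
  obtain ⟨i, hi, hfm⟩ := hf.exists_eq_take_drop
  obtain ⟨j, hj, hgm⟩ := hg.exists_eq_take_drop
  rcases le_total i j with hij | hji
  · obtain ⟨h, hhf, hhg, hlen⟩ := exists_common_infix_take_drop m hij hi hj
    exact ⟨h, hfm ▸ hhf, hgm ▸ hhg, hlen⟩
  · obtain ⟨h, hhg, hhf, hlen⟩ := exists_common_infix_take_drop m hji hj hi
    exact ⟨h, hfm ▸ hhf, hgm ▸ hhg, by omega⟩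

end List

section FactorDistance

variable {A : Type*}

theorem lcfLen_bddAbove (w w' : List A) :
    BddAbove {n | ∃ f : List A, f.length = n ∧ f <:+: w ∧ f <:+: w'} := by
  refine ⟨w.length, ?_⟩
  rintro _ ⟨f, rfl, hf, -⟩
  exact hf.length_le

theorem exists_infix_length_eq_lcfLen (w w' : List A) :
    ∃ f : List A, f.length = lcfLen w w' ∧ f <:+: w ∧ f <:+: w' :=
  Nat.sSup_mem (s := {n | ∃ f : List A, f.length = n ∧ f <:+: w ∧ f <:+: w'})
    ⟨0, [], rfl, List.nil_infix, List.nil_infix⟩ (lcfLen_bddAbove w w')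

theorem length_le_lcfLen {f w w' : List A} (hf : f <:+: w) (hf' : f <:+: w') :
    f.length ≤ lcfLen w w' :=
  le_csSup (lcfLen_bddAbove w w') ⟨f, rfl, hf, hf'⟩

theorem lcfLen_comm (w w' : List A) : lcfLen w w' = lcfLen w' w := by
  simp only [lcfLen, and_comm]

theorem dF_comm (w w' : List A) : dF w w' = dF w' w := by
  rw [dF, dF, lcfLen_comm, Nat.add_comm]

theorem dF_of_infix {f w : List A} (h : f <:+: w) : dF w f = w.length - f.length := by
  have hlcf : lcfLen w f = f.length := by
    obtain ⟨g, hg, -, hgf⟩ := exists_infix_length_eq_lcfLen w f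
    exact le_antisymm (hg ▸ hgf.length_le) (length_le_lcfLen h (List.infix_refl f))
  rw [dF, hlcf]
  omega

theorem dF_le_of_infix {f w w' : List A} (hf : f <:+: w) (hf' : f <:+: w') :
    dF w w' ≤ w.length + w'.length - 2 * f.length := by
  have := length_le_lcfLen hf hf'
  rw [dF]
  omega

theorem dF_triangle (w w'' w' : List A) : dF w w' ≤ dF w w'' + dF w'' w' := by
  obtain ⟨f, hf, hfw, hfw''⟩ := exists_infix_length_eq_lcfLen w w''
  obtain ⟨g, hg, hgw'', hgw'⟩ := exists_infix_length_eq_lcfLen w'' w'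
  obtain ⟨h, hhf, hhg, hlen⟩ := hfw''.exists_common_infix hgw''
  have := dF_le_of_infix (hhf.trans hfw) (hhg.trans hgw')
  unfold dF at this ⊢
  omega

theorem exists_dF_le_of_infix {f w w' : List A} (hfw : f <:+: w) (hfw' : f <:+: w') {k k' : ℕ}
    (hlen : w.length + w'.length ≤ k + k' + 2 * f.length) (hw : w.length ≤ k + f.length) :
    ∃ w'' : List A, dF w w'' ≤ k ∧ dF w'' w' ≤ k' := by
  have := hfw'.length_le
  obtain ⟨g, hfg, hgw', hg⟩ := hfw'.exists_infix_infix_length_eq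
    (n := w'.length - min (w'.length - f.length) k') (by omega) (by omega)
  refine ⟨g, ?_, ?_⟩
  · have := dF_le_of_infix hfw hfg
    omega
  · rw [dF_comm, dF_of_infix hgw']
    omega

theorem exists_dF_le_of_dF_le_add {w w' : List A} {k k' : ℕ} (h : dF w w' ≤ k + k') :
    ∃ w'' : List A, dF w w'' ≤ k ∧ dF w'' w' ≤ k' := by
  obtain ⟨f, hf, hfw, hfw'⟩ := exists_infix_length_eq_lcfLen w w'
  have hlen : w.length + w'.length ≤ k + k' + 2 * f.length := by
    rw [dF] at h
    omega
  by_cases hw : w.length ≤ k + f.length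
  · exact exists_dF_le_of_infix hfw hfw' hlen hw
  · obtain ⟨w'', h₁, h₂⟩ :=
      exists_dF_le_of_infix (k := k') (k' := k) hfw' hfw (by omega) (by omega)
    exact ⟨w'', dF_comm w w'' ▸ h₂, dF_comm w'' w' ▸ h₁⟩

end FactorDistance

theorem stmt_1_general {A : Type*} (k k' : ℕ) :
    ∀ w w' : List A, dF w w' ≤ k + k' ↔ ∃ w'' : List A, dF w w'' ≤ k ∧ dF w'' w' ≤ k' :=
  fun _ _ ↦ ⟨exists_dF_le_of_dF_le_add, fun ⟨w'', h₁, h₂⟩ ↦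
    (dF_triangle _ w'' _).trans (add_le_add h₁ h₂)⟩

/-- `F_k · F_{k'} = F_{k+k'}`. -/
theorem stmt_1 {A : Type*} [Fintype A] (hA : 2 ≤ Fintype.card A)
    (k k' : ℕ) (hk : 1 ≤ k) (hk' : 1 ≤ k') :
    ∀ w w' : List A, dF w w' ≤ k + k' ↔ ∃ w'' : List A, dF w w'' ≤ k ∧ dF w'' w' ≤ k' :=
  stmt_1_general k k'
end

section
/- Let A be a finite alphabet and let u, u', v, v', g ∈ A* with u ≠ u' or v ≠ v'. Then u g v = u' g v' holds if and only if there exist words α ∈ A*, β ∈ A⁺ (β nonempty), and n ∈ ℕ such that exactly one of the following holds: (i) u = u' α β, v' = β α v, and g = (αβ)^n α; or (ii) u' = u α β, v = β α v', and g = (αβ)^n α. -/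
/-!
If `|u'| < |u|`, write `u = u' w` and `v' = t v`; cancelling gives `w g = g t` with `w ≠ ε`.
By induction on `|g|` (peel `w` off the front of `g` while `|g| ≥ |w|`), this conjugacy
equation forces `w = αβ`, `t = βα` and `g = (αβ)^n α`. Equal lengths force `u = u'` and
`v = v'`, and the two alternatives exclude each other since each makes one of `u`, `u'`
strictly longer than the other.
-/

open scoped ENNReal

namespace List

variable {A : Type*}

theorem append_flatten_replicate_self (x : List A) (n : ℕ) :
    x ++ (replicate n x).flatten = (replicate n x).flatten ++ x := by
  rw [← flatten_cons, ← replicate_succ, replicate_succ', flatten_concat]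

theorem append_flatten_replicate_append_eq (α β : List A) (n : ℕ) :
    α ++ β ++ ((replicate n (α ++ β)).flatten ++ α) =
      (replicate n (α ++ β)).flatten ++ α ++ (β ++ α) := by
  rw [← append_assoc, append_flatten_replicate_self]
  simp only [append_assoc]

/-- Lyndon–Schützenberger. -/
theorem exists_of_append_eq_append {w g t : List A} (hw : w ≠ []) (h : w ++ g = g ++ t) :
    ∃ (α β : List A) (n : ℕ), β ≠ [] ∧ w = α ++ β ∧ t = β ++ α ∧
      g = (replicate n (α ++ β)).flatten ++ α := by
  rcases append_eq_append_iff.mp h with ⟨g', hg, hg'⟩ | ⟨c, rfl, rfl⟩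
  · have : g'.length < g.length := by
      rw [hg, length_append]
      exact Nat.lt_add_of_pos_left (length_pos_iff.mpr hw)
    obtain ⟨α, β, n, hβ, rfl, rfl, rfl⟩ :=
      exists_of_append_eq_append hw (hg.symm.trans hg')
    exact ⟨α, β, n + 1, hβ, rfl, rfl, by simp [hg, replicate_succ]⟩
  · rcases eq_or_ne c [] with rfl | hc
    · exact ⟨[], g, 1, by simpa using hw, by simp, by simp, by simp⟩
    · exact ⟨g, c, 0, hc, rfl, rfl, by simp⟩
termination_by g.length

end List

open List

/-- `u g v` and `u' g v'` are the same word, the occurrence of `g` in the first being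
shifted right by the period `αβ` of `g`. -/
def IsPeriodicShift {A : Type*} (u u' v v' g α β : List A) (n : ℕ) : Prop :=
  u = u' ++ α ++ β ∧ v' = β ++ α ++ v ∧ g = (replicate n (α ++ β)).flatten ++ α

namespace IsPeriodicShift

variable {A : Type*} {u u' v v' g α β : List A} {n : ℕ}

theorem append_eq (hs : IsPeriodicShift u u' v v' g α β n) :
    u ++ g ++ v = u' ++ g ++ v' := by
  obtain ⟨rfl, rfl, rfl⟩ := hs
  have := congrArg (u' ++ · ++ v) (append_flatten_replicate_append_eq α β n)
  simpa only [append_assoc] using this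

theorem length_lt (hs : IsPeriodicShift u u' v v' g α β n) (hβ : β ≠ []) :
    u'.length < u.length := by
  have := length_pos_iff.mpr hβ
  rw [hs.1]
  simp only [length_append]
  omega

end IsPeriodicShift

theorem exists_isPeriodicShift_of_length_lt {A : Type*} {u u' v v' g : List A}
    (hlt : u'.length < u.length) (heq : u ++ g ++ v = u' ++ g ++ v') :
    ∃ (α β : List A) (n : ℕ), β ≠ [] ∧ IsPeriodicShift u u' v v' g α β n := by
  have hlen := congrArg length heq
  simp only [length_append] at hlen
  have hu : u' <+: u := by
    refine prefix_of_prefix_length_le ?_ (prefix_append u (g ++ v)) hlt.le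
    rw [← append_assoc, heq, append_assoc]
    exact prefix_append u' (g ++ v')
  have hv : v <:+ v' :=
    suffix_of_suffix_length_le (heq ▸ suffix_append (u ++ g) v)
      (suffix_append (u' ++ g) v') (by omega)
  obtain ⟨w, rfl⟩ := hu
  obtain ⟨t, rfl⟩ := hv
  have hw : w ≠ [] := by
    rintro rfl
    simp at hlt
  have hwg : w ++ g = g ++ t := append_cancel_right (by simpa using heq)
  obtain ⟨α, β, n, hβ, rfl, rfl, hg⟩ := exists_of_append_eq_append hw hwg
  exact ⟨α, β, n, hβ, by simp, by simp, hg⟩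

theorem stmt_8_general {A : Type*}
    (u u' v v' g : List A) (h : u ≠ u' ∨ v ≠ v') :
    u ++ g ++ v = u' ++ g ++ v' ↔
      ∃ (α β : List A) (n : ℕ), β ≠ [] ∧
        Xor'
          (u = u' ++ α ++ β ∧ v' = β ++ α ++ v ∧
            g = (List.replicate n (α ++ β)).flatten ++ α)
          (u' = u ++ α ++ β ∧ v = β ++ α ++ v' ∧
            g = (List.replicate n (α ++ β)).flatten ++ α) := by
  constructor
  · intro heq
    rcases lt_trichotomy u'.length u.length with hlt | hlen | hlt
    · obtain ⟨α, β, n, hβ, hs⟩ := exists_isPeriodicShift_of_length_lt hlt heq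
      exact ⟨α, β, n, hβ,
        .inl ⟨hs, fun hs' => (hs.length_lt hβ).asymm (IsPeriodicShift.length_lt hs' hβ)⟩⟩
    · obtain ⟨rfl, hgv⟩ := append_inj (by simpa only [append_assoc] using heq) hlen.symm
      exact absurd (append_cancel_left hgv) (h.resolve_left (not_not.mpr rfl))
    · obtain ⟨α, β, n, hβ, hs⟩ := exists_isPeriodicShift_of_length_lt hlt heq.symm
      exact ⟨α, β, n, hβ,
        .inr ⟨hs, fun hs' => (hs.length_lt hβ).asymm (IsPeriodicShift.length_lt hs' hβ)⟩⟩
  · rintro ⟨α, β, n, -, ⟨hs, -⟩ | ⟨hs, -⟩⟩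
    · exact IsPeriodicShift.append_eq hs
    · exact (IsPeriodicShift.append_eq hs).symm

/-- if `u ≠ u'` or `v ≠ v'`, then `u g v = u' g v'` iff there are
`α ∈ A*`, `β ∈ A⁺`, `n ∈ ℕ` such that exactly one of the two conjugacy
conditions holds. -/
theorem stmt_8 {A : Type*} [Fintype A] (hA : 2 ≤ Fintype.card A)
    (u u' v v' g : List A) (h : u ≠ u' ∨ v ≠ v') :
    u ++ g ++ v = u' ++ g ++ v' ↔
      ∃ (α β : List A) (n : ℕ), β ≠ [] ∧
        Xor'
          (u = u' ++ α ++ β ∧ v' = β ++ α ++ v ∧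
            g = (List.replicate n (α ++ β)).flatten ++ α)
          (u' = u ++ α ++ β ∧ v = β ++ α ++ v' ∧
            g = (List.replicate n (α ++ β)).flatten ++ α) :=
  stmt_8_general u u' v v' g h
end

section
/- Let A be a finite alphabet with |A| ≥ 2, k a positive integer, and let X ⊆ A* be a regular P̲_k-independent code. The following are equivalent: (i) X is maximal in the family of P̲_k-independent codes (i.e., any P̲_k-independent code containing X equals X); (ii) X is a maximal code; (iii) X is complete; (iv) μ(X) = 1, where μ is the uniform Bernoulli measure. -/
open scoped ENNReal

/-!
(ii) ⇒ (i) is immediate; the theorem follows from (i) ⇒ (iii) ⇒ (iv) ⇒ (ii).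

(iv) ⇒ (ii) is the Kraft–McMillan inequality `μ(Y) ≤ 1` for every code `Y`: by unique
factorization, the `n`-th power of a finite partial sum of `μ(Y)` is a sum over distinct words
of length at most `n L`, hence at most `n L + 1`, and this forces the partial sum to be `≤ 1`.

(iii) ⇒ (iv): if `X` is complete and recognized by an automaton with `N` states, then pumping
down shows that every word `w` has an extension `p w q ∈ X*` with `|p|, |q| ≤ N`. This makes
`μ(X*)` infinite, while `μ(X) < 1` would give `μ(X*) ≤ (1 - μ(X))⁻¹`.

(i) ⇒ (iii): if `w` is not a factor of `X*`, take `y = aᵐ w bᵐ` with `a ≠ b`, `m > |w|`, `m ≥ k`.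
Since `y` is unbordered and is not a factor of `X*`, `X ∪ {y}` is still a code. It is also
`P̲_k`-independent, because every word within prefix distance `k` of `y` begins with `aᵐ w`.
-/

open Computability

open Filter Topology in
lemma le_one_of_forall_pow_le {s a : ℝ} (h : ∀ n : ℕ, s ^ n ≤ a * n + 1) : s ≤ 1 := by
  by_contra! hs
  have hlim : Tendsto (fun n : ℕ => (a * n + 1) / s ^ n) atTop (𝓝 (a * 0 + 0)) := by
    refine (((tendsto_pow_const_div_const_pow_of_one_lt 1 hs).const_mul a).add
      (tendsto_pow_atTop_nhds_zero_of_lt_one (by positivity) (inv_lt_one_of_one_lt₀ hs))).congr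
      fun n => ?_
    rw [pow_one, inv_pow, add_div, mul_div_assoc, one_div]
  obtain ⟨n, hn⟩ := (hlim.eventually (gt_mem_nhds (show a * 0 + 0 < (1 : ℝ) by simp))).exists
  exact (h n).not_gt ((div_lt_one (by positivity)).1 hn)

lemma ENNReal.le_one_of_forall_pow_le {s : ℝ≥0∞} {a : ℕ} (h : ∀ n : ℕ, s ^ n ≤ a * n + 1) :
    s ≤ 1 := by
  have hs : s ≠ ⊤ := ne_top_of_le_ne_top (b := (a : ℝ≥0∞) + 1) (by finiteness) (by simpa using h 1)
  rw [← ENNReal.ofReal_toReal hs, ENNReal.ofReal_le_one]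
  refine _root_.le_one_of_forall_pow_le (a := a) fun n => ?_
  have hn := ENNReal.toReal_mono (by finiteness) (h n)
  rw [ENNReal.toReal_pow, show (a : ℝ≥0∞) * n + 1 = ((a * n + 1 : ℕ) : ℝ≥0∞) by push_cast; rfl,
    ENNReal.toReal_natCast] at hn
  exact_mod_cast hn

section BernoulliMeasure

variable {A : Type*} [Fintype A]

noncomputable def weight (A : Type*) [Fintype A] (w : List A) : ℝ≥0∞ :=
  (Fintype.card A : ℝ≥0∞)⁻¹ ^ w.length

lemma mu_eq_tsum_weight (S : Set (List A)) : mu A S = ∑' w : S, weight A w := rfl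

lemma weight_nil : weight A [] = 1 := pow_zero _

lemma weight_append (u v : List A) : weight A (u ++ v) = weight A u * weight A v := by
  simp only [weight, List.length_append, pow_add]

lemma weight_ne_zero (w : List A) : weight A w ≠ 0 :=
  pow_ne_zero _ (ENNReal.inv_ne_zero.2 (ENNReal.natCast_ne_top _))

lemma pow_le_weight [Nonempty A] {w : List A} {C : ℕ} (hw : w.length ≤ C) :
    (Fintype.card A : ℝ≥0∞)⁻¹ ^ C ≤ weight A w :=
  pow_le_pow_of_le_one zero_le
    (ENNReal.inv_le_one.2 (by exact_mod_cast Fintype.card_pos)) hw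

lemma mu_mono {S T : Set (List A)} (h : S ⊆ T) : mu A S ≤ mu A T :=
  ENNReal.tsum_mono_subtype (weight A) h

lemma sum_weight_le_mu {S : Set (List A)} {F : Finset (List A)} (hF : ↑F ⊆ S) :
    ∑ w ∈ F, weight A w ≤ mu A S :=
  (Finset.tsum_subtype F (weight A)).symm.le.trans (mu_mono hF)

lemma mu_setOf_length_eq [Nonempty A] (n : ℕ) : mu A {w | w.length = n} = 1 := by
  have hcard : (Fintype.card A : ℝ≥0∞) ≠ 0 := by exact_mod_cast Fintype.card_ne_zero
  calc mu A {w | w.length = n} = ∑' v : List.Vector A n, weight A v.toList := rfl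
    _ = (Fintype.card A : ℝ≥0∞) ^ n * (Fintype.card A : ℝ≥0∞)⁻¹ ^ n := by
      simp [weight, tsum_fintype, card_vector]
    _ = 1 := by rw [← mul_pow, ENNReal.mul_inv_cancel hcard (ENNReal.natCast_ne_top _), one_pow]

lemma mu_setOf_length_le [Nonempty A] (N : ℕ) : mu A {w | w.length ≤ N} ≤ N + 1 := by
  have hunion : {w : List A | w.length ≤ N} = ⋃ n ∈ Finset.range (N + 1), {w | w.length = n} := by
    ext w; simp
  calc mu A {w | w.length ≤ N}
      ≤ ∑ n ∈ Finset.range (N + 1), mu A {w | w.length = n} := by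
        rw [hunion]; exact ENNReal.tsum_biUnion_le (weight A) _ _
    _ = N + 1 := by simp [mu_setOf_length_eq]

lemma tsum_weight_eq_top [Nonempty A] : ∑' w : List A, weight A w = ⊤ := by
  rw [← (Equiv.sigmaFiberEquiv List.length).tsum_eq, ENNReal.tsum_sigma']
  calc ∑' (n : ℕ) (w : {w : List A // w.length = n}), weight A w = ∑' _ : ℕ, (1 : ℝ≥0∞) :=
        tsum_congr mu_setOf_length_eq
    _ = ⊤ := ENNReal.tsum_const_eq_top_of_ne_zero one_ne_zero

lemma weight_flatten_ofFn {n : ℕ} (g : Fin n → List A) :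
    weight A (List.ofFn g).flatten = ∏ i, weight A (g i) := by
  simp [weight, List.length_flatten, List.sum_ofFn, Finset.prod_pow_eq_pow_sum]

theorem IsCode.sum_weight_pow_le [Nonempty A] {X : Set (List A)} (hX : IsCode X)
    {F : Finset (List A)} (hF : ↑F ⊆ X) (n : ℕ) :
    (∑ w ∈ F, weight A w) ^ n ≤ F.sup List.length * n + 1 := by
  classical
  set P := Fintype.piFinset fun _ : Fin n => F
  have hmem : ∀ g ∈ P, ∀ x ∈ List.ofFn g, x ∈ X := by
    intro g hg x hx
    obtain ⟨i, rfl⟩ := List.mem_ofFn.1 hx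
    exact hF (Fintype.mem_piFinset.1 hg i)
  have hinj : Set.InjOn (fun g : Fin n → List A => (List.ofFn g).flatten) P :=
    fun g hg g' hg' h => List.ofFn_injective (hX _ _ (hmem g hg) (hmem g' hg') h)
  have hlen : ∀ g ∈ P, (List.ofFn g).flatten.length ≤ F.sup List.length * n := by
    intro g hg
    simp only [List.length_flatten, List.map_ofFn, List.sum_ofFn, Function.comp_apply]
    calc ∑ i, (g i).length ≤ ∑ _i : Fin n, F.sup List.length :=
          Finset.sum_le_sum fun i _ => Finset.le_sup (Fintype.mem_piFinset.1 hg i)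
      _ = F.sup List.length * n := by simp [mul_comm]
  calc (∑ w ∈ F, weight A w) ^ n = ∑ g ∈ P, weight A (List.ofFn g).flatten := by
        simp only [weight_flatten_ofFn, ← Finset.prod_univ_sum, Fin.prod_const, P]
    _ = ∑ z ∈ P.image fun g => (List.ofFn g).flatten, weight A z := (Finset.sum_image hinj).symm
    _ ≤ mu A {w | w.length ≤ F.sup List.length * n} := sum_weight_le_mu (by
        intro z hz
        obtain ⟨g, hg, rfl⟩ := Finset.mem_image.1 hz
        exact hlen g hg)
    _ ≤ _ := by exact_mod_cast mu_setOf_length_le _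

theorem IsCode.mu_le_one [Nonempty A] {X : Set (List A)} (hX : IsCode X) : mu A X ≤ 1 := by
  rw [mu_eq_tsum_weight, ENNReal.tsum_eq_iSup_sum]
  refine iSup_le fun s => ?_
  refine (Finset.sum_map s (Function.Embedding.subtype _) (weight A)).symm.trans_le
    (ENNReal.le_one_of_forall_pow_le (hX.sum_weight_pow_le ?_))
  intro w hw
  obtain ⟨x, -, rfl⟩ := Finset.mem_map.1 hw
  exact x.2

lemma mu_insert {S : Set (List A)} {y : List A} (hy : y ∉ S) :
    mu A (insert y S) = weight A y + mu A S := by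
  rw [Set.insert_eq, mu_eq_tsum_weight, ENNReal.summable.tsum_union_disjoint
    (Set.disjoint_singleton_left.2 hy) ENNReal.summable, tsum_singleton]
  rfl

theorem IsCode.eq_of_mu_eq_one_of_subset [Nonempty A] {X Y : Set (List A)} (hY : IsCode Y)
    (hX : mu A X = 1) (hXY : X ⊆ Y) : Y = X := by
  refine Set.Subset.antisymm (fun y hyY => ?_) hXY
  by_contra hyX
  have : weight A y + 1 ≤ 0 + 1 :=
    calc weight A y + 1 = mu A (insert y X) := by rw [mu_insert hyX, hX]
      _ ≤ mu A Y := mu_mono (Set.insert_subset hyY hXY)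
      _ ≤ 0 + 1 := by simpa using hY.mu_le_one
  exact weight_ne_zero y
    (nonpos_iff_eq_zero.1 (ENNReal.le_of_add_le_add_right ENNReal.one_ne_top this))

lemma mu_one : mu A (1 : Language A) = 1 := by
  rw [Language.one_def, mu_eq_tsum_weight, tsum_singleton, weight_nil]

lemma mu_mul_le (L M : Language A) : mu A (L * M) ≤ mu A L * mu A M := by
  let f : Set.Elem L × Set.Elem M → Set.Elem (L * M) :=
    fun p => ⟨p.1.1 ++ p.2.1, Language.append_mem_mul p.1.2 p.2.2⟩
  have hf : Function.Surjective f := by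
    rintro ⟨z, hz⟩
    obtain ⟨a, ha, b, hb, rfl⟩ := Language.mem_mul.1 hz
    exact ⟨(⟨a, ha⟩, ⟨b, hb⟩), rfl⟩
  calc mu A (L * M) ≤ ∑' p : Set.Elem L × Set.Elem M, weight A (p.1.1 ++ p.2.1) :=
        ENNReal.tsum_le_tsum_comp_of_surjective hf fun z => weight A z
    _ = ∑' (a : Set.Elem L) (b : Set.Elem M), weight A a * weight A b := by
        simp only [weight_append, ENNReal.tsum_prod']
    _ = mu A L * mu A M := by
        simp only [ENNReal.tsum_mul_left, ENNReal.tsum_mul_right]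
        rfl

lemma mu_pow_le (L : Language A) (n : ℕ) : mu A (L ^ n) ≤ mu A L ^ n := by
  induction n with
  | zero => rw [pow_zero, pow_zero, mu_one]
  | succ n ih =>
    rw [pow_succ, pow_succ]
    exact (mu_mul_le _ _).trans (mul_le_mul_left ih _)

lemma mu_kstar_le (L : Language A) : mu A (L∗ : Language A) ≤ (1 - mu A L)⁻¹ :=
  calc mu A (L∗ : Language A) = mu A (⋃ n : ℕ, (L ^ n : Set (List A))) := by
        rw [Language.kstar_eq_iSup_pow]; rfl
    _ ≤ ∑' n : ℕ, mu A (L ^ n) := ENNReal.tsum_iUnion_le_tsum (weight A) _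
    _ ≤ ∑' n : ℕ, mu A L ^ n := ENNReal.tsum_le_tsum (mu_pow_le L)
    _ = (1 - mu A L)⁻¹ := ENNReal.tsum_geometric _

theorem mu_eq_top_of_forall_exists_append_append_mem [Nonempty A] {S : Set (List A)} (C : ℕ)
    (h : ∀ w : List A, ∃ p q : List A, p.length ≤ C ∧ q.length ≤ C ∧ p ++ w ++ q ∈ S) :
    mu A S = ⊤ := by
  choose p q hp hq hS using h
  -- every word of `S` is `p w ++ w ++ q w` for at most `(C + 1) ^ 2` words `w`
  let f : List A → S × Fin (C + 1) × Fin (C + 1) := fun w =>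
    (⟨p w ++ w ++ q w, hS w⟩, ⟨(p w).length, by grind⟩, ⟨(q w).length, by grind⟩)
  have hf : Function.Injective f := by
    intro w w' hww'
    simp only [f, Prod.mk.injEq, Subtype.mk.injEq, Fin.mk.injEq] at hww'
    obtain ⟨hz, hpl, hql⟩ := hww'
    exact (List.append_inj (List.append_inj' hz hql).1 hpl).2
  set r := (Fintype.card A : ℝ≥0∞)⁻¹
  have key : ⊤ * r ^ (2 * C) ≤ ((C + 1) * (C + 1) : ℕ) * mu A S :=
    calc ⊤ * r ^ (2 * C) = ∑' w, weight A w * r ^ (2 * C) := by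
          rw [ENNReal.tsum_mul_right, tsum_weight_eq_top]
      _ ≤ ∑' w, weight A (p w ++ w ++ q w) := ENNReal.tsum_le_tsum fun w => by
          rw [weight_append, weight_append, two_mul, pow_add, mul_comm (weight A (p w)), mul_assoc]
          gcongr
          · exact pow_le_weight (hp w)
          · exact pow_le_weight (hq w)
      _ = ∑' w, weight A (f w).1 := rfl
      _ ≤ ∑' x : S × Fin (C + 1) × Fin (C + 1), weight A x.1 :=
          ENNReal.tsum_comp_le_tsum_of_injective hf fun x => weight A x.1
      _ = ((C + 1) * (C + 1) : ℕ) * mu A S := by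
          rw [ENNReal.tsum_prod', mu_eq_tsum_weight, ← ENNReal.tsum_mul_left]
          simp [mul_comm]
  rw [ENNReal.top_mul (pow_ne_zero _ (ENNReal.inv_ne_zero.2 (ENNReal.natCast_ne_top _))),
    top_le_iff] at key
  by_contra hS
  exact ENNReal.mul_ne_top (ENNReal.natCast_ne_top _) hS key

end BernoulliMeasure

section Words

variable {α : Type*}

lemma Language.append_mem_kstar {L : Language α} {u v : List α} (hu : u ∈ L∗) (hv : v ∈ L∗) :
    u ++ v ∈ L∗ :=
  (kstar_mul_kstar L).le (Language.append_mem_mul hu hv)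

lemma Language.mem_kstar_of_mem {L : Language α} {u : List α} (hu : u ∈ L) : u ∈ L∗ :=
  (le_kstar : L ≤ L∗) hu

theorem Language.exists_eq_append_of_append_mem_kstar {L : Language α} {u v : List α}
    (h : u ++ v ∈ L∗) (hne : u ++ v ≠ []) :
    ∃ t x₁ x₂ r, t ∈ L∗ ∧ x₁ ++ x₂ ∈ L ∧ r ∈ L∗ ∧ u = t ++ x₁ ∧ v = x₂ ++ r := by
  obtain ⟨l, hl, hlL⟩ := Language.mem_kstar.1 h
  induction l generalizing u with
  | nil => exact absurd hl hne
  | cons x l ih =>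
    have hx : x ∈ L := hlL x List.mem_cons_self
    have hlL' : ∀ y ∈ l, y ∈ L := fun y hy => hlL y (List.mem_cons_of_mem x hy)
    rw [List.flatten_cons] at hl
    obtain ⟨c, rfl, hc⟩ | ⟨c, rfl, rfl⟩ := List.append_eq_append_iff.1 hl.symm
    · by_cases hcv : c ++ v = []
      · obtain ⟨rfl, rfl⟩ := List.append_eq_nil_iff.1 hcv
        exact ⟨[], x, [], [], Language.nil_mem_kstar L, by simpa using hx,
          Language.nil_mem_kstar L, by simp, rfl⟩
      obtain ⟨t, x₁, x₂, r, ht, hx₁₂, hr, rfl, rfl⟩ :=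
        ih (hc ▸ Language.join_mem_kstar hlL') hcv hc.symm hlL'
      exact ⟨x ++ t, x₁, x₂, r, Language.append_mem_kstar (Language.mem_kstar_of_mem hx) ht,
        hx₁₂, hr, by simp, rfl⟩
    · exact ⟨[], u, c, l.flatten, Language.nil_mem_kstar L, hx, Language.join_mem_kstar hlL',
        rfl, rfl⟩

lemma isCompleteSet_iff (L : Language α) :
    IsCompleteSet L ↔ ∀ w : List α, ∃ z ∈ L∗, w <:+: z := by
  simp only [IsCompleteSet, Language.mem_kstar]
  refine forall_congr' fun w => ⟨fun ⟨l, hl, hw⟩ => ⟨_, ⟨l, rfl, hl⟩, hw⟩, ?_⟩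
  rintro ⟨_, ⟨l, rfl, hl⟩, hw⟩
  exact ⟨l, hl, hw⟩

end Words

namespace DFA

variable {α σ : Type*} [Fintype σ] (M : DFA α σ)

theorem exists_length_le_evalFrom_eq (s : σ) (u : List α) :
    ∃ v : List α, v.length ≤ Fintype.card σ ∧ M.evalFrom s v = M.evalFrom s u := by
  induction hn : u.length using Nat.strong_induction_on generalizing u with
  | _ n ih =>
    by_cases hu : u.length ≤ Fintype.card σ
    · exact ⟨u, hu, rfl⟩
    obtain ⟨q, a, b, c, rfl, -, hb, ha, -, hc⟩ := M.evalFrom_split (not_le.1 hu).le rfl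
    have hlen : (a ++ c).length < n := by
      have := List.length_pos_iff.2 hb
      simp only [List.length_append] at hn ⊢
      omega
    obtain ⟨v, hv, hv'⟩ := ih _ hlen (a ++ c) rfl
    exact ⟨v, hv, by rw [hv', evalFrom_of_append, ha, hc]⟩

theorem exists_length_le_append_mem_kstar_left {u v : List α} (h : u ++ v ∈ M.accepts∗) :
    ∃ u', u'.length ≤ Fintype.card σ ∧ u' ++ v ∈ M.accepts∗ := by
  by_cases hne : u ++ v = []
  · exact ⟨u, by simp [(List.append_eq_nil_iff.1 hne).1], h⟩
  obtain ⟨t, x₁, x₂, r, -, hx, hr, rfl, rfl⟩ := Language.exists_eq_append_of_append_mem_kstar h hne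
  obtain ⟨x₁', hlen, heq⟩ := M.exists_length_le_evalFrom_eq M.start x₁
  have hx' : x₁' ++ x₂ ∈ M.accepts := by
    change M.evalFrom M.start (x₁' ++ x₂) ∈ M.accept
    rwa [evalFrom_of_append, heq, ← evalFrom_of_append]
  exact ⟨x₁', hlen, by
    rw [← List.append_assoc]; exact Language.append_mem_kstar (Language.mem_kstar_of_mem hx') hr⟩

theorem exists_length_le_append_mem_kstar_right {u v : List α} (h : u ++ v ∈ M.accepts∗) :
    ∃ v', v'.length ≤ Fintype.card σ ∧ u ++ v' ∈ M.accepts∗ := by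
  by_cases hne : u ++ v = []
  · exact ⟨v, by simp [(List.append_eq_nil_iff.1 hne).2], h⟩
  obtain ⟨t, x₁, x₂, r, ht, hx, -, rfl, rfl⟩ := Language.exists_eq_append_of_append_mem_kstar h hne
  obtain ⟨x₂', hlen, heq⟩ := M.exists_length_le_evalFrom_eq (M.evalFrom M.start x₁) x₂
  have hx' : x₁ ++ x₂' ∈ M.accepts := by
    change M.evalFrom M.start (x₁ ++ x₂') ∈ M.accept
    rwa [evalFrom_of_append, heq, ← evalFrom_of_append]
  exact ⟨x₂', hlen, by
    rw [List.append_assoc]; exact Language.append_mem_kstar ht (Language.mem_kstar_of_mem hx')⟩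

end DFA

theorem mu_eq_one_of_isCompleteSet {A : Type*} [Fintype A] [Nonempty A] {X : Set (List A)}
    (hreg : IsRegularLang X) (hX : IsCode X) (hc : IsCompleteSet X) : mu A X = 1 := by
  obtain ⟨Q, _, M, rfl⟩ := hreg
  have hfac : ∀ w : List A, ∃ p q : List A, p.length ≤ Fintype.card Q ∧
      q.length ≤ Fintype.card Q ∧ p ++ w ++ q ∈ M.accepts∗ := by
    intro w
    obtain ⟨_, hz, p, q, rfl⟩ := (isCompleteSet_iff M.accepts).1 hc w
    obtain ⟨p', hp', hz'⟩ := M.exists_length_le_append_mem_kstar_left (u := p) (v := w ++ q)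
      (by rwa [← List.append_assoc])
    obtain ⟨q', hq', hz''⟩ := M.exists_length_le_append_mem_kstar_right (u := p' ++ w) (v := q)
      (by rwa [List.append_assoc])
    exact ⟨p', q', hp', hq', hz''⟩
  have htop := mu_eq_top_of_forall_exists_append_append_mem _ hfac
  refine le_antisymm hX.mu_le_one (not_lt.1 fun hlt => ?_)
  exact ((mu_kstar_le M.accepts).trans_lt (ENNReal.inv_lt_top.2 (tsub_pos_of_lt hlt))).ne htop

section Unbordered

variable {α : Type*}

def IsUnbordered (y : List α) : Prop :=
  ∀ d, 0 < d → d < y.length → ¬ y.drop d <+: y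

lemma getElem?_add_eq_of_drop_prefix {y : List α} {d : ℕ} (h : y.drop d <+: y) {i : ℕ}
    (hi : i + d < y.length) : y[i + d]? = y[i]? := by
  have hi' : i < (y.drop d).length := by rw [List.length_drop]; omega
  have h₁ : (y.drop d)[i]? = y[i]? := by
    rw [List.getElem?_eq_getElem hi', h.getElem hi', ← List.getElem?_eq_getElem]
  rwa [List.getElem?_drop, Nat.add_comm] at h₁

theorem isUnbordered_replicate_append_append_replicate {a b : α} (hab : a ≠ b) {w : List α}
    {m : ℕ} (hm : w.length < m) :
    IsUnbordered (List.replicate m a ++ w ++ List.replicate m b) := by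
  intro d hd hdy hpre
  set y := List.replicate m a ++ w ++ List.replicate m b
  have hlen : y.length = m + w.length + m := by simp [y]; omega
  have ha : ∀ i < m, y[i]? = some a := fun i hi => by
    simp [y, List.getElem?_append_left, hi]
  have hb : ∀ i, m + w.length ≤ i → i < y.length → y[i]? = some b := fun i hi hiy => by
    rw [List.getElem?_append_right (by simp; omega), List.getElem?_replicate_of_lt (by simp; omega)]
  -- a period `d > |w|` carries an `a` of the first block onto the `b` block, and a period
  -- `d ≤ |w| < m` spreads the first block of `a`s over all of `y`
  rcases lt_or_ge w.length d with hwd | hdw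
  · have hi : m + w.length - d + d < y.length := by omega
    have := getElem?_add_eq_of_drop_prefix hpre hi
    rw [hb _ (by omega) hi, ha _ (by omega)] at this
    exact hab (Option.some_inj.1 this).symm
  · have hall : ∀ i < y.length, y[i]? = some a := by
      intro i
      induction i using Nat.strong_induction_on with
      | _ i ih =>
        intro hi
        rcases lt_or_ge i m with him | him
        · exact ha i him
        · rw [← Nat.sub_add_cancel (show d ≤ i by omega),
            getElem?_add_eq_of_drop_prefix hpre (by omega)]
          exact ih _ (by omega) (by omega)
    have := hall (y.length - 1) (by omega)
    rw [hb _ (by omega) (by omega)] at this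
    exact hab (Option.some_inj.1 this).symm

theorem eq_of_append_append_eq {L : Language α} {y u₁ u₂ r₁ r₂ : List α}
    (hfac : ∀ z ∈ L∗, ¬ y <:+: z) (hy : IsUnbordered y) (hu₁ : u₁ ∈ L∗) (hu₂ : u₂ ∈ L∗)
    (h : u₁ ++ y ++ r₁ = u₂ ++ y ++ r₂) : u₁ = u₂ := by
  wlog hle : u₁.length ≤ u₂.length generalizing u₁ u₂ r₁ r₂
  · exact (this hu₂ hu₁ h.symm (by omega)).symm
  have hpre : u₂ <+: u₁ ++ y ++ r₁ := by rw [h]; exact ⟨y ++ r₂, by simp⟩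
  obtain ⟨d, rfl⟩ : u₁ <+: u₂ :=
    List.prefix_of_prefix_length_le ⟨y ++ r₁, by simp⟩ hpre hle
  have hyd : y ++ r₁ = d ++ (y ++ r₂) := by simpa using h
  rcases Nat.eq_zero_or_pos d.length with h0 | hpos
  · simp [List.length_eq_zero_iff.1 h0]
  rcases lt_or_ge d.length y.length with hlt | hge
  · refine absurd ?_ (hy d.length hpos hlt)
    have hdrop := congrArg (List.drop d.length) hyd
    rw [List.drop_append_of_le_length hlt.le, List.drop_left] at hdrop
    exact List.prefix_of_prefix_length_le ⟨r₁, hdrop⟩ ⟨r₂, rfl⟩ (by simp)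
  · have hdy : d <+: y ++ r₁ := by rw [hyd]; exact ⟨y ++ r₂, rfl⟩
    have hyd' : y <+: d := List.prefix_of_prefix_length_le ⟨r₁, rfl⟩ hdy hge
    exact absurd (hyd'.isInfix.trans (List.suffix_append u₁ d).isInfix) (hfac _ hu₂)

lemma List.forall_mem_or_exists_eq_append_cons (p : α → Prop) (l : List α) :
    (∀ x ∈ l, p x) ∨ ∃ l₁ a l₂, l = l₁ ++ a :: l₂ ∧ (∀ x ∈ l₁, p x) ∧ ¬ p a := by
  induction l with
  | nil => simp
  | cons x l ih =>
    by_cases hx : p x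
    · rcases ih with hl | ⟨l₁, a, l₂, rfl, hl₁, ha⟩
      · exact Or.inl (by simpa [hx] using hl)
      · exact Or.inr ⟨x :: l₁, a, l₂, rfl, by simpa [hx] using hl₁, ha⟩
    · exact Or.inr ⟨[], x, l, rfl, by simp, hx⟩

theorem IsCode.insert_of_isUnbordered {L : Language α} {y : List α} (hL : IsCode L)
    (hfac : ∀ z ∈ L∗, ¬ y <:+: z) (hy : IsUnbordered y) : IsCode (insert y L) := by
  have hmem : ∀ {x}, x ∈ insert y L → x ∉ L → x = y :=
    fun hx hxL => (Set.mem_insert_iff.1 hx).resolve_right hxL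
  intro l
  induction hn : l.length using Nat.strong_induction_on generalizing l with
  | _ n ih =>
    intro m hl hm hlm
    rcases List.forall_mem_or_exists_eq_append_cons (· ∈ L) l with
      hlL | ⟨l₁, a, l₂, rfl, hl₁, ha⟩ <;>
    rcases List.forall_mem_or_exists_eq_append_cons (· ∈ L) m with
      hmL | ⟨m₁, b, m₂, rfl, hm₁, hb⟩
    · exact hL l m hlL hmL hlm
    · have hb' := hmem (hm b (by simp)) hb
      subst b
      exact absurd ⟨m₁.flatten, m₂.flatten, by simp⟩
        (hlm ▸ hfac _ (Language.join_mem_kstar hlL))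
    · have ha' := hmem (hl a (by simp)) ha
      subst a
      exact absurd ⟨l₁.flatten, l₂.flatten, by simp⟩
        (hlm.symm ▸ hfac _ (Language.join_mem_kstar hmL))
    · have ha' := hmem (hl a (by simp)) ha
      have hb' := hmem (hm b (by simp)) hb
      subst a b
      have hlm' : l₁.flatten ++ y ++ l₂.flatten = m₁.flatten ++ y ++ m₂.flatten := by
        simpa using hlm
      obtain rfl := hL _ _ hl₁ hm₁ (eq_of_append_append_eq hfac hy
        (Language.join_mem_kstar hl₁) (Language.join_mem_kstar hm₁) hlm')
      rw [ih l₂.length (by simp [← hn]; omega) l₂ rfl m₂ (fun x hx => hl x (by simp [hx]))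
        (fun x hx => hm x (by simp [hx])) (by simpa using hlm')]

end Unbordered

section PrefixDistance

variable {α : Type*}

lemma exists_prefix_length_eq_lcpLen (w w' : List α) :
    ∃ p : List α, p.length = lcpLen w w' ∧ p <+: w ∧ p <+: w' :=
  Nat.sSup_mem (s := {n | ∃ p : List α, p.length = n ∧ p <+: w ∧ p <+: w'})
    ⟨0, [], rfl, List.nil_prefix, List.nil_prefix⟩
    ⟨w.length, fun _ ⟨_, hp, hpw, _⟩ => hp ▸ hpw.length_le⟩

lemma dP_comm (w w' : List α) : dP w w' = dP w' w := by
  have : lcpLen w w' = lcpLen w' w := by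
    simp only [lcpLen]
    congr 1
    ext n
    exact ⟨fun ⟨p, h, hw, hw'⟩ => ⟨p, h, hw', hw⟩, fun ⟨p, h, hw, hw'⟩ => ⟨p, h, hw', hw⟩⟩
  simp only [dP, this]
  omega

theorem take_prefix_of_dP_le {x y : List α} {k : ℕ} (h : dP x y ≤ k) :
    y.take (y.length - k) <+: x := by
  obtain ⟨p, hp, hpx, hpy⟩ := exists_prefix_length_eq_lcpLen x y
  have hlen : y.length - k ≤ p.length := by
    have := hpx.length_le
    unfold dP at h
    omega
  exact (List.prefix_of_prefix_length_le (List.take_prefix _ y) hpy (by simpa using hlen)).trans hpx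

theorem isCompleteSet_of_maximal_dP_independent {a b : α} (hab : a ≠ b) {k : ℕ} {X : Set (List α)}
    (hX : IsCode X) (hind : ¬ ∃ x ∈ X, ∃ y ∈ X, x ≠ y ∧ dP x y ≤ k)
    (hmax : ∀ Y : Set (List α), IsCode Y → (¬ ∃ x ∈ Y, ∃ y ∈ Y, x ≠ y ∧ dP x y ≤ k) →
        X ⊆ Y → Y = X) :
    IsCompleteSet X := by
  rw [isCompleteSet_iff (L := X)]
  by_contra! ⟨w, hw⟩
  set m := max (w.length + 1) k
  set y := List.replicate m a ++ w ++ List.replicate m b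
  have hwy : List.replicate m a ++ w <+: y := ⟨List.replicate m b, rfl⟩
  have hyfac : ∀ z ∈ ((X : Language α)∗ : Language α), ¬ y <:+: z := fun z hz hyz =>
    hw z hz (((List.suffix_append _ w).isInfix.trans hwy.isInfix).trans hyz)
  have hcode := hX.insert_of_isUnbordered hyfac
    (isUnbordered_replicate_append_append_replicate hab (by omega))
  have hyX : y ∉ X := fun hy => hyfac y (Language.mem_kstar_of_mem hy) (List.infix_refl y)
  have hfar : ∀ x ∈ X, ¬ dP x y ≤ k := by
    intro x hx hxy
    have hwx : List.replicate m a ++ w <+: x :=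
      (List.prefix_of_prefix_length_le hwy (List.take_prefix _ y) (by simp [y]; omega)).trans
        (take_prefix_of_dP_le hxy)
    exact hw x (Language.mem_kstar_of_mem hx) ((List.suffix_append _ w).isInfix.trans hwx.isInfix)
  have hind' : ¬ ∃ x ∈ insert y X, ∃ x' ∈ insert y X, x ≠ x' ∧ dP x x' ≤ k := by
    rintro ⟨x, hx, x', hx', hne, hd⟩
    rcases hx with rfl | hx <;> rcases hx' with rfl | hx'
    · exact hne rfl
    · exact hfar x' hx' (dP_comm _ _ ▸ hd)
    · exact hfar x hx hd
    · exact hind ⟨x, hx, x', hx', hne, hd⟩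
  exact hyX (hmax _ hcode hind' (Set.subset_insert y X) ▸ Set.mem_insert y X)

end PrefixDistance

theorem stmt_13_general {A : Type*} [Fintype A] (hA : 2 ≤ Fintype.card A)
    (k : ℕ) (X : Set (List A))
    (hreg : IsRegularLang X) (hcode : IsCode X)
    (hind : ¬ ∃ x ∈ X, ∃ y ∈ X, x ≠ y ∧ dP x y ≤ k) :
    ((∀ Y : Set (List A), IsCode Y → (¬ ∃ x ∈ Y, ∃ y ∈ Y, x ≠ y ∧ dP x y ≤ k) →
        X ⊆ Y → Y = X) ↔
      (∀ Y : Set (List A), IsCode Y → X ⊆ Y → Y = X)) ∧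
    ((∀ Y : Set (List A), IsCode Y → X ⊆ Y → Y = X) ↔ IsCompleteSet X) ∧
    (IsCompleteSet X ↔ mu A X = 1) := by
  obtain ⟨a, b, hab⟩ := Fintype.exists_pair_of_one_lt_card (α := A) hA
  have : Nonempty A := ⟨a⟩
  have indep_complete := isCompleteSet_of_maximal_dP_independent hab hcode hind
  have complete_mu := mu_eq_one_of_isCompleteSet hreg hcode
  have mu_max : mu A X = 1 → ∀ Y : Set (List A), IsCode Y → X ⊆ Y → Y = X :=
    fun h _ hY => hY.eq_of_mu_eq_one_of_subset h
  have max_indep : (∀ Y : Set (List A), IsCode Y → X ⊆ Y → Y = X) →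
      ∀ Y : Set (List A), IsCode Y → (¬ ∃ x ∈ Y, ∃ y ∈ Y, x ≠ y ∧ dP x y ≤ k) → X ⊆ Y → Y = X :=
    fun h Y hY _ => h Y hY
  exact ⟨⟨fun h => mu_max (complete_mu (indep_complete h)), max_indep⟩,
    ⟨fun h => indep_complete (max_indep h), fun h => mu_max (complete_mu h)⟩,
    ⟨complete_mu, fun h => indep_complete (max_indep (mu_max h))⟩⟩

/-- for a regular `P̲_k`-independent code `X`, maximality among
`P̲_k`-independent codes, maximality among codes, completeness, and `μ(X) = 1`
are pairwise equivalent. -/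
theorem stmt_13 {A : Type*} [Fintype A] (hA : 2 ≤ Fintype.card A)
    (k : ℕ) (hk : 1 ≤ k) (X : Set (List A))
    (hreg : IsRegularLang X) (hcode : IsCode X)
    (hind : ¬ ∃ x ∈ X, ∃ y ∈ X, x ≠ y ∧ dP x y ≤ k) :
    ((∀ Y : Set (List A), IsCode Y → (¬ ∃ x ∈ Y, ∃ y ∈ Y, x ≠ y ∧ dP x y ≤ k) →
        X ⊆ Y → Y = X) ↔
      (∀ Y : Set (List A), IsCode Y → X ⊆ Y → Y = X)) ∧
    ((∀ Y : Set (List A), IsCode Y → X ⊆ Y → Y = X) ↔ IsCompleteSet X) ∧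
    (IsCompleteSet X ↔ mu A X = 1) :=
  stmt_13_general hA k X hreg hcode hind
end

section
/- Let A be a finite alphabet with |A| ≥ 2, let σ be a permutation of A, and let θ : A* → A* be either the monoid automorphism extending σ (θ(a_1⋯a_n) = σ(a_1)⋯σ(a_n)) or the anti-automorphism extending σ (θ(a_1⋯a_n) = σ(a_n)⋯σ(a_1)). Every regular θ̲-independent code X ⊆ A* can be embedded into a complete code Z ⊇ X that is still θ̲-independent (and may be taken regular). -/
open scoped ENNReal

/-!
If `X` is complete, take `Z = X`. Otherwise some word `w` is not a factor of `X*`. Choose an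
unbordered word `y = aⁿ b m bⁿ` (`n = |m| + 1`, `a ≠ b`) having `w`, `θ w` and `θ⁻¹ w` as
factors and not fixed by `θ` unless `θ` is the identity. Let `U` be the set of words that neither
lie in `X*` nor contain `y`, and `Z = X ∪ y(Uy)*` (the completion of Ehrenfeucht and Rozenberg).
* `Z` is a code: since `y` is unbordered and is a factor of no word of `X* ∪ U`, the occurrences of
  `y` in a word of `Z*` are exactly the visible ones in the factors from `y(Uy)*`, and this
  synchronizes any two factorizations.
* `Z` is complete: cutting `w y` after each occurrence of `y` writes `y w y` as `y c₁ y ⋯ cₖ y` with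
  each `cᵢ` in `X*` or in `U`, hence `y w y ∈ Z*`.
* `Z` is regular, regular languages being closed under boolean operations, product and star
  (by the Myhill–Nerode theorem).
* `Z` is `θ̲`-independent: a pair `x`, `θ x` with one word in `X` and the other in `y(Uy)*` would
  make `w` a factor of `X*`; if both lie in `y(Uy)*`, then `θ y` and `y` are prefixes of `θ x` of
  the same length, so `θ y = y`.
-/

open Computability

namespace Language

variable {α : Type*} {L M : Language α}

theorem mem_mul_singleton {v y : List α} : v ∈ L * {y} ↔ ∃ u ∈ L, v = u ++ y := by
  simp only [mem_mul]
  constructor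
  · rintro ⟨u, hu, _, rfl, rfl⟩
    exact ⟨u, hu, rfl⟩
  · rintro ⟨u, hu, rfl⟩
    exact ⟨u, hu, y, rfl, rfl⟩

theorem mem_kstar_of_mem_s18 {a : List α} (ha : a ∈ L) : a ∈ L∗ :=
  ⟨[a], by simp, by simpa⟩

theorem append_mem_kstar_s18 {a b : List α} (ha : a ∈ L∗) (hb : b ∈ L∗) : a ++ b ∈ L∗ :=
  kstar_mul_kstar L ▸ append_mem_mul ha hb

theorem mem_leftQuotient_mul {x y : List α} :
    y ∈ (L * M).leftQuotient x ↔
      y ∈ L.leftQuotient x * M ∨ ∃ v, (∃ u ∈ L, u ++ v = x) ∧ y ∈ M.leftQuotient v := by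
  simp only [mem_leftQuotient, mem_mul]
  constructor
  · rintro ⟨u, hu, w, hw, huw⟩
    rcases List.append_eq_append_iff.1 huw with ⟨c, rfl, rfl⟩ | ⟨c, rfl, rfl⟩
    · exact .inr ⟨c, ⟨u, hu, rfl⟩, hw⟩
    · exact .inl ⟨c, hu, w, hw, rfl⟩
  · rintro (⟨c, hc, w, hw, rfl⟩ | ⟨v, ⟨u, hu, rfl⟩, hv⟩)
    · exact ⟨_, hc, w, hw, by simp⟩
    · exact ⟨u, hu, _, hv, by simp⟩

protected theorem IsRegular.mul (hL : L.IsRegular) (hM : M.IsRegular) : (L * M).IsRegular := by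
  rw [isRegular_iff_finite_range_leftQuotient] at *
  let F : Language α × Set (Language α) → Language α := fun p => p.1 * M + ⨆ Q ∈ p.2, Q
  refine ((hL.prod hM.finite_subsets).image F).subset ?_
  rintro _ ⟨x, rfl⟩
  refine ⟨(L.leftQuotient x, M.leftQuotient '' {v | ∃ u ∈ L, u ++ v = x}),
    ⟨⟨x, rfl⟩, Set.image_subset_range _ _⟩, ?_⟩
  ext y
  rw [mem_leftQuotient_mul]
  simp only [F, mem_add, mem_iSup, Set.mem_image, exists_prop, Set.mem_ofPred_eq,
    exists_exists_and_eq_and]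

theorem mem_leftQuotient_kstar {x y : List α} (hx : x ≠ []) :
    y ∈ (L∗).leftQuotient x ↔
      ∃ c ≠ [], (∃ u ∈ L∗, u ++ c = x) ∧ y ∈ L.leftQuotient c * L∗ := by
  simp only [mem_leftQuotient, mem_mul, mem_kstar]
  constructor
  · rintro ⟨W, hW, hWL⟩
    induction W generalizing x with
    | nil => simp_all
    | cons w W ih =>
      have hwL : w ∈ L := hWL w (by simp)
      have hWL' : ∀ z ∈ W, z ∈ L := fun z hz => hWL z (by simp [hz])
      rw [List.flatten_cons] at hW
      rcases List.append_eq_append_iff.1 hW with ⟨d, rfl, rfl⟩ | ⟨c, rfl, hc⟩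
      · exact ⟨x, hx, ⟨[], ⟨[], rfl, by simp⟩, rfl⟩, d, hwL, _, ⟨W, rfl, hWL'⟩, rfl⟩
      rcases eq_or_ne c [] with rfl | hc0
      · exact ⟨w, by simpa using hx, ⟨[], ⟨[], rfl, by simp⟩, by simp⟩, [], by simpa using hwL,
          y, ⟨W, by simpa using hc.symm, hWL'⟩, rfl⟩
      obtain ⟨c', hc', ⟨_, ⟨U, rfl, hU⟩, rfl⟩, hy⟩ := ih hc0 hc.symm hWL'
      refine ⟨c', hc', ⟨w ++ U.flatten, ⟨w :: U, rfl, ?_⟩, by simp⟩, hy⟩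
      simp only [List.mem_cons]
      rintro z (rfl | hz)
      exacts [hwL, hU z hz]
  · rintro ⟨c, -, ⟨u, ⟨U, rfl, hU⟩, rfl⟩, d, hd, r, ⟨R, rfl, hR⟩, rfl⟩
    refine ⟨U ++ (c ++ d) :: R, by simp, ?_⟩
    simp only [List.mem_append, List.mem_cons]
    rintro z (hz | rfl | hz)
    exacts [hU z hz, hd, hR z hz]

protected theorem IsRegular.kstar (hL : L.IsRegular) : L∗.IsRegular := by
  rw [isRegular_iff_finite_range_leftQuotient] at *
  let F : Set (Language α) → Language α := fun S => ⨆ Q ∈ S, Q * L∗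
  refine ((hL.finite_subsets.image F).insert (L∗)).subset ?_
  rintro _ ⟨x, rfl⟩
  rcases eq_or_ne x [] with rfl | hx
  · exact Or.inl (leftQuotient_nil _)
  refine Or.inr ⟨L.leftQuotient '' {c | c ≠ [] ∧ ∃ u ∈ L∗, u ++ c = x},
    Set.image_subset_range _ _, ?_⟩
  ext y
  rw [mem_leftQuotient_kstar hx]
  simp only [F, mem_iSup, Set.mem_image, Set.mem_ofPred_eq, exists_prop,
    exists_exists_and_eq_and]
  simp only [and_assoc]

theorem _root_.Set.Finite.isRegular {L : Language α} (hL : (L : Set (List α)).Finite) :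
    L.IsRegular := by
  rw [isRegular_iff_finite_range_leftQuotient]
  refine ((hL.biUnion fun w _ => (List.finite_toSet w.tails)).finite_subsets).subset ?_
  rintro _ ⟨x, rfl⟩ t ht
  exact Set.mem_biUnion ht ((List.mem_tails _ _).2 (List.suffix_append x t))

theorem isRegular_top : (⊤ : Language α).IsRegular := by
  rw [isRegular_iff_finite_range_leftQuotient]
  refine (Set.finite_singleton ⊤).subset ?_
  rintro _ ⟨x, rfl⟩
  exact Set.mem_singleton_iff.2 (eq_top_iff.2 fun _ _ => trivial)

end Language

namespace List

variable {α : Type*}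

theorem map_infix_map_iff {β : Type*} {f : α → β} (hf : Function.Injective f)
    {u v : List α} : u.map f <:+: v.map f ↔ u <:+: v := by
  refine ⟨fun h => ?_, fun h => h.map f⟩
  obtain ⟨l, hl, he⟩ := infix_map_iff.1 h
  rwa [map_injective_iff.2 hf he]

def Unbordered (y : List α) : Prop :=
  ∀ t, t <+: y → t <:+ y → t = [] ∨ t = y

theorem unbordered_of_forall_shift {y : List α}
    (h : ∀ k, 0 < k → k < y.length → ∃ i, k + i < y.length ∧ y[i]? ≠ y[k + i]?) :
    y.Unbordered := by
  intro t hpre hsuf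
  rcases eq_or_ne t [] with rfl | ht
  · exact .inl rfl
  refine .inr (hpre.eq_of_length ?_)
  by_contra hlen
  have hlt : t.length < y.length := lt_of_le_of_ne hpre.length_le hlen
  have ht0 := length_pos_iff.2 ht
  obtain ⟨i, hi, hne⟩ := h (y.length - t.length) (by omega) (by omega)
  have h1 : t[i]? = y[i]? := by
    rw [prefix_iff_eq_take.1 hpre, getElem?_take_of_lt (by omega)]
  have h2 : t[i]? = y[y.length - t.length + i]? := by
    rw [congrArg (·[i]?) (suffix_iff_eq_drop.1 hsuf), getElem?_drop]
  exact hne (h1.symm.trans h2)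

namespace Unbordered

variable {y : List α}

theorem eq_nil_of_append_eq (hy : y.Unbordered) {s r t : List α} (hs : ¬ y <:+: s)
    (h : y ++ r = s ++ (y ++ t)) : s = [] := by
  rcases append_eq_append_iff.1 h with ⟨a, rfl, -⟩ | ⟨c, hyc, hc⟩
  · exact (hs (infix_append [] y a)).elim
  have hcy : c <+: y := prefix_of_prefix_length_le ⟨r, hc.symm⟩ (prefix_append y t) (by simp [hyc])
  rcases hy c hcy ⟨s, hyc.symm⟩ with rfl | rfl
  · exact (hs (by simp [hyc])).elim
  · simpa using hyc

theorem eq_of_append_eq (hy : y.Unbordered) {g h r s : List α} (hg : ¬ y <:+: g)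
    (hh : ¬ y <:+: h) (heq : g ++ (y ++ r) = h ++ (y ++ s)) : g = h := by
  rcases append_eq_append_iff.1 heq with ⟨a, rfl, ha⟩ | ⟨a, rfl, ha⟩
  · rw [hy.eq_nil_of_append_eq (fun hya => hh (hya.trans (suffix_append _ _).isInfix)) ha,
      append_nil]
  · rw [hy.eq_nil_of_append_eq (fun hya => hg (hya.trans (suffix_append _ _).isInfix)) ha,
      append_nil]

end Unbordered

end List

namespace CodeCompletion

open Language

variable {α : Type*}

section Completion

variable (X : Language α) (y : List α)

def factorsOfStar : Language α := {v | ∃ w ∈ X∗, v <:+: w}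

def avoiding : Language α := {c | ¬ y <:+: c}

def gaps : Language α := {u | u ∉ X∗ ∧ ¬ y <:+: u}

def blocks : Language α := {y} * (gaps X y * {y})∗

/-- The paper's `Z = X ∪ y(Uy)*`, with `U = gaps X y`. -/
def completion : Language α := X + blocks X y

variable {X y}

theorem not_infix_of_mem_kstar (hyX : y ∉ factorsOfStar X) {w : List α} (hw : w ∈ X∗) :
    ¬ y <:+: w :=
  fun h => hyX ⟨w, hw, h⟩

theorem mem_blocks {z : List α} :
    z ∈ blocks X y ↔ ∃ L : List (List α), (∀ v ∈ L, v ∈ gaps X y * {y}) ∧ z = y ++ L.flatten := by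
  simp only [blocks, mem_mul, mem_kstar]
  constructor
  · rintro ⟨_, rfl, _, ⟨L, rfl, hL⟩, rfl⟩
    exact ⟨L, hL, rfl⟩
  · rintro ⟨L, hL, rfl⟩
    exact ⟨y, rfl, _, ⟨L, rfl, hL⟩, rfl⟩

theorem prefix_of_mem_blocks {z : List α} (hz : z ∈ blocks X y) : y <+: z := by
  obtain ⟨L, -, rfl⟩ := mem_blocks.1 hz
  exact List.prefix_append y _

theorem suffix_of_mem_blocks {z : List α} (hz : z ∈ blocks X y) : y <:+ z := by
  obtain ⟨L, hL, rfl⟩ := mem_blocks.1 hz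
  rcases L.eq_nil_or_concat with rfl | ⟨L, v, rfl⟩
  · simp
  obtain ⟨u, -, rfl⟩ := mem_mul_singleton.1 (hL v (by simp))
  exact ⟨y ++ L.flatten ++ u, by simp⟩

theorem exists_eq_append_first_block {l : List (List α)} (hl : ∀ z ∈ l, z ∈ completion X y) :
    ∃ xs l₂, l = xs ++ l₂ ∧ (∀ x ∈ xs, x ∈ X) ∧
      (l₂ = [] ∨ ∃ z l', l₂ = z :: l' ∧ z ∈ blocks X y ∧ ∀ z ∈ l', z ∈ completion X y) := by
  induction l with
  | nil => exact ⟨[], [], rfl, by simp, .inl rfl⟩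
  | cons z l ih =>
    have hl' : ∀ z ∈ l, z ∈ completion X y := fun z' hz' => hl z' (List.mem_cons_of_mem _ hz')
    rcases hl z List.mem_cons_self with hz | hz
    · obtain ⟨xs, l₂, rfl, hxs, hl₂⟩ := ih hl'
      refine ⟨z :: xs, l₂, rfl, ?_, hl₂⟩
      simp only [List.mem_cons, forall_eq_or_imp]
      exact ⟨hz, hxs⟩
    · exact ⟨[], z :: l, rfl, by simp, .inr ⟨z, l, rfl, hz, hl'⟩⟩

theorem flatten_ne_gap_append (hy : y.Unbordered) (hyX : y ∉ factorsOfStar X)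
    {l : List (List α)} (hl : ∀ z ∈ l, z ∈ completion X y) {u s : List α} (hu : u ∈ gaps X y) :
    l.flatten ≠ u ++ (y ++ s) := by
  intro h
  obtain ⟨xs, l₂, rfl, hxs, rfl | ⟨z, l', rfl, hz, -⟩⟩ := exists_eq_append_first_block hl
  · refine not_infix_of_mem_kstar hyX (join_mem_kstar hxs) ?_
    rw [List.append_nil] at h
    exact h ▸ List.infix_append' u y s
  · obtain ⟨L, -, rfl⟩ := mem_blocks.1 hz
    have hxs' := join_mem_kstar hxs
    have := hy.eq_of_append_eq (not_infix_of_mem_kstar hyX hxs') hu.2 (by simpa using h)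
    exact hu.1 (this ▸ hxs')

theorem eq_of_flatten_append_eq (hy : y.Unbordered) (hyX : y ∉ factorsOfStar X)
    {L L' l m : List (List α)} (hL : ∀ v ∈ L, v ∈ gaps X y * {y})
    (hL' : ∀ v ∈ L', v ∈ gaps X y * {y}) (hl : ∀ z ∈ l, z ∈ completion X y)
    (hm : ∀ z ∈ m, z ∈ completion X y) (h : L.flatten ++ l.flatten = L'.flatten ++ m.flatten) :
    L = L' := by
  induction L generalizing L' with
  | nil =>
    cases L' with
    | nil => rfl
    | cons v' L' =>
      obtain ⟨u', hu', rfl⟩ := mem_mul_singleton.1 (hL' v' List.mem_cons_self)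
      exact (flatten_ne_gap_append hy hyX hl hu' (by simpa using h)).elim
  | cons v L ih =>
    obtain ⟨u, hu, rfl⟩ := mem_mul_singleton.1 (hL v List.mem_cons_self)
    cases L' with
    | nil => exact (flatten_ne_gap_append hy hyX hm hu (by simpa using h.symm)).elim
    | cons v' L' =>
      obtain ⟨u', hu', rfl⟩ := mem_mul_singleton.1 (hL' v' List.mem_cons_self)
      obtain rfl : u = u' := hy.eq_of_append_eq hu.2 hu'.2 (by simpa using h)
      rw [ih (fun v hv => hL v (List.mem_cons_of_mem _ hv))
        (fun v hv => hL' v (List.mem_cons_of_mem _ hv)) (by simpa using h)]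

theorem eq_of_mem_blocks (hy : y.Unbordered) (hyX : y ∉ factorsOfStar X)
    {z z' : List α} {l m : List (List α)} (hz : z ∈ blocks X y) (hz' : z' ∈ blocks X y)
    (hl : ∀ z ∈ l, z ∈ completion X y) (hm : ∀ z ∈ m, z ∈ completion X y)
    (h : z ++ l.flatten = z' ++ m.flatten) : z = z' := by
  obtain ⟨L, hL, rfl⟩ := mem_blocks.1 hz
  obtain ⟨L', hL', rfl⟩ := mem_blocks.1 hz'
  rw [eq_of_flatten_append_eq hy hyX hL hL' hl hm (by simpa using h)]

theorem eq_of_flatten_eq (hX : IsCode X) (hy : y.Unbordered) (hyX : y ∉ factorsOfStar X) :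
    ∀ {l m : List (List α)}, (∀ z ∈ l, z ∈ completion X y) → (∀ z ∈ m, z ∈ completion X y) →
      l.flatten = m.flatten → l = m
  | l, m, hl, hm, h => by
    have hfree := fun {xs : List (List α)} (hxs : ∀ x ∈ xs, x ∈ X) =>
      not_infix_of_mem_kstar hyX (join_mem_kstar hxs)
    obtain ⟨xs, l₂, rfl, hxs, rfl | ⟨z, l', rfl, hz, hl'⟩⟩ := exists_eq_append_first_block hl <;>
    obtain ⟨xs', m₂, rfl, hxs', rfl | ⟨z', m', rfl, hz', hm'⟩⟩ := exists_eq_append_first_block hm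
    · simpa using hX xs xs' hxs hxs' (by simpa using h)
    · obtain ⟨L', -, rfl⟩ := mem_blocks.1 hz'
      have h' : xs.flatten = xs'.flatten ++ (y ++ (L'.flatten ++ m'.flatten)) := by simpa using h
      exact (hfree hxs (h' ▸ List.infix_append' _ _ _)).elim
    · obtain ⟨L, -, rfl⟩ := mem_blocks.1 hz
      have h' : xs'.flatten = xs.flatten ++ (y ++ (L.flatten ++ l'.flatten)) := by
        simpa using h.symm
      exact (hfree hxs' (h' ▸ List.infix_append' _ _ _)).elim
    · obtain ⟨L, -, rfl⟩ := mem_blocks.1 hz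
      obtain ⟨L', -, rfl⟩ := mem_blocks.1 hz'
      obtain rfl : xs = xs' :=
        hX xs xs' hxs hxs' (hy.eq_of_append_eq (hfree hxs) (hfree hxs') (by simpa using h))
      have hzz := eq_of_mem_blocks hy hyX hz hz' hl' hm' (by simpa using h)
      rw [hzz, eq_of_flatten_eq hX hy hyX hl' hm' (by simpa [hzz] using h)]
  termination_by l => l.length
  decreasing_by subst_vars; simp; omega

theorem isCode_completion (hX : IsCode X) (hy : y.Unbordered) (hyX : y ∉ factorsOfStar X) :
    IsCode (completion X y) :=
  fun _ _ hl hm h => eq_of_flatten_eq hX hy hyX hl hm h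

theorem append_mem_kstar_avoiding (hy : y ≠ []) (w : List α) :
    w ++ y ∈ (avoiding y * {y})∗ := by
  induction h : w.length using Nat.strong_induction_on generalizing w with
  | _ n ih =>
  by_cases hw : y <:+: w
  · obtain ⟨p, q, rfl⟩ := hw
    have hyl := List.length_pos_iff.2 hy
    simp only [List.length_append] at h
    rw [List.append_assoc]
    exact append_mem_kstar_s18 (ih _ (by omega) p rfl) (ih _ (by omega) q rfl)
  · exact mem_kstar_of_mem_s18 (mem_mul_singleton.2 ⟨w, hw, rfl⟩)

theorem append_mem_blocks_mul {v : List α} (hv : v ∈ (avoiding y * {y})∗) :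
    y ++ v ∈ blocks X y * (completion X y)∗ := by
  obtain ⟨L, rfl, hL⟩ := hv
  induction L with
  | nil => exact ⟨y, mem_blocks.2 ⟨[], by simp, by simp⟩, [], nil_mem_kstar _, by simp⟩
  | cons v L ih =>
    obtain ⟨c, hc, rfl⟩ := mem_mul_singleton.1 (hL v List.mem_cons_self)
    obtain ⟨z, hz, w, hw, hzw⟩ := ih fun v hv => hL v (List.mem_cons_of_mem _ hv)
    by_cases hcX : c ∈ X∗
    · have hcZ : c ∈ (completion X y)∗ := (kstar_mono (le_self_add : X ≤ completion X y)) hcX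
      have hzZ : z ∈ (completion X y)∗ := mem_kstar_of_mem_s18 (Or.inr hz)
      refine ⟨y, mem_blocks.2 ⟨[], by simp, by simp⟩, c ++ (z ++ w),
        append_mem_kstar_s18 hcZ (append_mem_kstar_s18 hzZ hw), ?_⟩
      simp [hzw]
    · obtain ⟨M, hM, rfl⟩ := mem_blocks.1 hz
      refine ⟨y ++ ((c ++ y) :: M).flatten, mem_blocks.2 ⟨(c ++ y) :: M, ?_, rfl⟩, w, hw, ?_⟩
      · simp only [List.mem_cons, forall_eq_or_imp]
        exact ⟨mem_mul_singleton.2 ⟨c, ⟨hcX, hc⟩, rfl⟩, hM⟩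
      · simp [← hzw]

theorem isCompleteSet_completion (hy : y ≠ []) : IsCompleteSet (completion X y) := by
  intro w
  obtain ⟨z, hz, v, hv, hzv⟩ := append_mem_blocks_mul (X := X) (append_mem_kstar_avoiding hy w)
  obtain ⟨l, hl, hlZ⟩ := mem_kstar.1 <| append_mem_kstar_s18 (mem_kstar_of_mem_s18 (Or.inr hz)) hv
  have hzv : z ++ v = y ++ (w ++ y) := hzv
  exact ⟨l, hlZ, hl ▸ hzv ▸ List.infix_append' y w y⟩

theorem mem_top_mul_singleton_mul_top {u : List α} : u ∈ (⊤ : Language α) * {y} * ⊤ ↔ y <:+: u := by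
  rw [mem_mul]
  simp only [mem_mul_singleton]
  constructor
  · rintro ⟨_, ⟨s, -, rfl⟩, t, -, rfl⟩
    exact ⟨s, t, rfl⟩
  · rintro ⟨s, t, rfl⟩
    exact ⟨_, ⟨s, trivial, rfl⟩, t, trivial, rfl⟩

theorem isRegular_completion (hX : X.IsRegular) : (completion X y).IsRegular := by
  have hy : ({y} : Language α).IsRegular := (Set.finite_singleton y).isRegular
  have hgaps : gaps X y = (X∗ + ⊤ * {y} * ⊤)ᶜ := by
    ext u
    change u ∉ X∗ ∧ ¬ y <:+: u ↔ ¬ (u ∈ X∗ + (⊤ : Language α) * {y} * ⊤)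
    rw [mem_add, mem_top_mul_singleton_mul_top, not_or]
  rw [completion, blocks, hgaps]
  have hU : (X∗ + ⊤ * {y} * ⊤)ᶜ.IsRegular :=
    (hX.kstar.add ((isRegular_top.mul hy).mul isRegular_top)).compl
  exact hX.add (hy.mul (hU.mul hy).kstar)

end Completion

section Marker

def marker (a b : α) (m : List α) : List α :=
  List.replicate (m.length + 1) a ++ b :: (m ++ List.replicate (m.length + 1) b)

theorem marker_ne_nil (a b : α) (m : List α) : marker a b m ≠ [] := by
  simp [marker]

theorem infix_marker (a b : α) (m : List α) : m <:+: marker a b m :=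
  ⟨List.replicate (m.length + 1) a ++ [b], List.replicate (m.length + 1) b, by simp [marker]⟩

theorem marker_unbordered {a b : α} (hab : a ≠ b) (m : List α) : (marker a b m).Unbordered := by
  apply List.unbordered_of_forall_shift
  intro k hk hky
  have hlen : (marker a b m).length = 3 * (m.length + 1) := by simp [marker]; omega
  rw [hlen] at hky ⊢
  have ha : ∀ i < m.length + 1, (marker a b m)[i]? = some a := by
    intro i hi; simp [marker, List.getElem?_append_left, hi]
  have hb1 : (marker a b m)[m.length + 1]? = some b := by simp [marker]
  have hb2 : ∀ j, 2 * (m.length + 1) ≤ j → j < 3 * (m.length + 1) →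
      (marker a b m)[j]? = some b := by
    intro j hj hj'
    obtain ⟨i, rfl⟩ : ∃ i, j = (m.length + 1) + (i + 1) := ⟨j - m.length - 2, by omega⟩
    simp only [marker, List.getElem?_append_right, List.length_replicate, Nat.le_add_right,
      Nat.add_sub_cancel_left, List.getElem?_cons_succ]
    rw [List.getElem?_append_right (by omega), List.getElem?_replicate, if_pos (by omega)]
  rcases le_or_gt k (m.length + 1) with hkn | hkn
  · refine ⟨m.length + 1 - k, by omega, ?_⟩
    rw [ha _ (by omega), show k + (m.length + 1 - k) = m.length + 1 by omega, hb1]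
    simpa using hab
  · refine ⟨2 * (m.length + 1) - k, by omega, ?_⟩
    rw [ha _ (by omega), hb2 _ (by omega) (by omega)]
    simpa using hab

theorem map_marker_ne {σ : Equiv.Perm α} {a : α} (ha : σ a ≠ a) (b : α) (m : List α) :
    (marker a b m).map σ ≠ marker a b m := by
  intro h
  have := congrArg List.head? h
  simp [marker, List.replicate_succ] at this
  exact ha this

/-- The letter `σ⁻¹ a` placed before the trailing `b`s becomes, under the antimorphism, the letter
`a` facing the `b` that follows the leading `a`s. -/
theorem reverse_map_marker_ne (σ : Equiv.Perm α) {a b : α} (hab : a ≠ b) (m : List α) :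
    ((marker a b (m ++ [σ.symm a])).map σ).reverse ≠ marker a b (m ++ [σ.symm a]) := by
  intro h
  have := congrArg (List.drop (m.length + 2)) h
  simp [marker, List.reverse_append] at this
  exact hab this.1

end Marker

def IsIndependent (θ : List α → List α) (X : Language α) : Prop :=
  ¬ ∃ x ∈ X, ∃ z ∈ X, x ≠ z ∧ z = θ x

def ExtendsPerm (σ : Equiv.Perm α) (θ : List α → List α) : Prop :=
  (∀ w, θ w = w.map σ) ∨ (∀ w, θ w = (w.map σ).reverse)

namespace ExtendsPerm

variable {σ : Equiv.Perm α} {θ : List α → List α}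

theorem infix_iff (hθ : ExtendsPerm σ θ) {u v : List α} : θ u <:+: θ v ↔ u <:+: v := by
  rcases hθ with h | h <;> simp only [h, List.reverse_infix, List.map_infix_map_iff σ.injective]

theorem surjective (hθ : ExtendsPerm σ θ) : Function.Surjective θ := by
  intro w
  rcases hθ with h | h
  · exact ⟨w.map σ.symm, by simp [h]⟩
  · exact ⟨(w.map σ.symm).reverse, by simp [h, List.map_reverse]⟩

theorem length_eq (hθ : ExtendsPerm σ θ) (v : List α) : (θ v).length = v.length := by
  rcases hθ with h | h <;> simp [h]

theorem prefix_of_prefix_of_suffix (hθ : ExtendsPerm σ θ) {y v : List α} (hp : y <+: v)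
    (hs : y <:+ v) : θ y <+: θ v := by
  rcases hθ with h | h
  · simpa only [h] using hp.map σ
  · simpa only [h, List.reverse_prefix] using hs.map σ

theorem exists_unbordered_infix [Fintype α] (hα : 2 ≤ Fintype.card α) (hθ : ExtendsPerm σ θ)
    (m : List α) : ∃ y, y ≠ [] ∧ y.Unbordered ∧ m <:+: y ∧ (θ y = y → ∀ v, θ v = v) := by
  rcases hθ with h | h
  · by_cases hσ : ∀ c, σ c = c
    · obtain ⟨a, b, hab⟩ := Fintype.exists_pair_of_one_lt_card hα
      refine ⟨marker a b m, marker_ne_nil a b m, marker_unbordered hab m, infix_marker a b m,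
        fun _ v => ?_⟩
      obtain rfl : σ = 1 := Equiv.ext hσ
      simp [h]
    · obtain ⟨a, ha⟩ := not_forall.1 hσ
      obtain ⟨b, hb⟩ := Fintype.exists_ne_of_one_lt_card hα a
      exact ⟨marker a b m, marker_ne_nil a b m, marker_unbordered hb.symm m, infix_marker a b m,
        fun hy => (map_marker_ne ha b m (h _ ▸ hy)).elim⟩
  · obtain ⟨a, b, hab⟩ := Fintype.exists_pair_of_one_lt_card hα
    exact ⟨marker a b (m ++ [σ.symm a]), marker_ne_nil _ _ _, marker_unbordered hab _,
      (List.prefix_append m _).isInfix.trans (infix_marker a b _),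
      fun hy => (reverse_map_marker_ne σ hab m (h _ ▸ hy)).elim⟩

theorem exists_marker [Fintype α] (hα : 2 ≤ Fintype.card α) (hθ : ExtendsPerm σ θ)
    (w : List α) : ∃ y, y ≠ [] ∧ y.Unbordered ∧ w <:+: y ∧ w <:+: θ y ∧ θ w <:+: y ∧
      (θ y = y → ∀ v, θ v = v) := by
  obtain ⟨w', hw'⟩ := hθ.surjective w
  obtain ⟨y, hy0, hy, hm, hfix⟩ := hθ.exists_unbordered_infix hα (w' ++ w ++ θ w)
  refine ⟨y, hy0, hy, (List.infix_append w' w _).trans hm, ?_,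
    (List.suffix_append _ _).isInfix.trans hm, hfix⟩
  rw [← hw', hθ.infix_iff]
  exact (List.prefix_append _ _).isInfix.trans ((List.prefix_append _ _).isInfix.trans hm)

theorem isIndependent_completion {X : Language α} {y w : List α} (hθ : ExtendsPerm σ θ)
    (hw : w ∉ factorsOfStar X) (hwy : w <:+: θ y) (hθwy : θ w <:+: y)
    (hfix : θ y = y → ∀ v, θ v = v) (hind : IsIndependent θ X) :
    IsIndependent θ (completion X y) := by
  rintro ⟨x, hx | hx, _, hz | hz, hne, rfl⟩
  · exact hind ⟨x, hx, _, hz, hne, rfl⟩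
  · exact hw ⟨x, mem_kstar_of_mem_s18 hx,
      hθ.infix_iff.1 (hθwy.trans (prefix_of_mem_blocks hz).isInfix)⟩
  · exact hw ⟨θ x, mem_kstar_of_mem_s18 hz,
      hwy.trans (hθ.infix_iff.2 (prefix_of_mem_blocks hx).isInfix)⟩
  · have hθy : θ y <+: θ x :=
      hθ.prefix_of_prefix_of_suffix (prefix_of_mem_blocks hx) (suffix_of_mem_blocks hx)
    have hfixed : θ y = y :=
      (List.prefix_of_prefix_length_le hθy (prefix_of_mem_blocks hz)
        (hθ.length_eq y).le).eq_of_length (hθ.length_eq y)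
    exact hne (hfix hfixed x).symm

end ExtendsPerm

end CodeCompletion

open CodeCompletion

/-- for `θ` the (anti-)automorphism of `A*` extending a permutation
`σ` of `A`, every regular `θ̲`-independent code embeds in a complete
(`θ̲`-independent, regular) code. -/
theorem stmt_18 {A : Type*} [Fintype A] (hA : 2 ≤ Fintype.card A)
    (σ : Equiv.Perm A) (θ : List A → List A)
    (hθ : (∀ w : List A, θ w = w.map σ) ∨ (∀ w : List A, θ w = (w.map σ).reverse))
    (X : Set (List A)) (hreg : IsRegularLang X) (hcode : IsCode X)
    (hind : ¬ ∃ x ∈ X, ∃ y ∈ X, x ≠ y ∧ y = θ x) :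
    ∃ Z : Set (List A), X ⊆ Z ∧ IsCode Z ∧ IsCompleteSet Z ∧
      (¬ ∃ x ∈ Z, ∃ y ∈ Z, x ≠ y ∧ y = θ x) ∧ IsRegularLang Z := by
  by_cases hX : IsCompleteSet X
  · exact ⟨X, subset_rfl, hcode, hX, hind, hreg⟩
  obtain ⟨w, hw⟩ : ∃ w, w ∉ factorsOfStar X := by
    refine not_forall.1 fun h => hX fun w => ?_
    obtain ⟨_, ⟨l, rfl, hl⟩, hwl⟩ := h w
    exact ⟨l, hl, hwl⟩
  obtain ⟨y, hy0, hy, hwy, hwθy, hθwy, hfix⟩ := ExtendsPerm.exists_marker hA hθ w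
  have hyX : y ∉ factorsOfStar X := fun ⟨v, hv, hyv⟩ => hw ⟨v, hv, hwy.trans hyv⟩
  exact ⟨completion X y, fun _ hx => Or.inl hx, isCode_completion hcode hy hyX,
    isCompleteSet_completion hy0,
    ExtendsPerm.isIndependent_completion hθ hw hwθy hθwy hfix hind, isRegular_completion hreg⟩
end
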